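/- arXiv:1904.04476 — 9 statements merged into one kernel-verified Lean document; each statement's English description precedes it below -/
import Mathlib

section
/- Let α, β, γ be pairwise distinct real roots of λ³ - aλ² - bλ - c = 0 with c ≠ 0, and suppose |β| < |α| and |γ| < |α|. Let J be the sequence with J(n+3) = a·J(n+2) + b·J(n+1) + c·J(n), J(0)=0, J(1)=1, J(2)=a. Then the ratio J(n+1)/J(n) converges to α as n → ∞. -/
theorem stmt3 (a b c α β γ : ℝ) (hc : c ≠ 0)
    (hαβ : α ≠ β) (hαγ : α ≠ γ) (hβγ : β ≠ γ)
    (hrα : α ^ 3 - a * α ^ 2 - b * α - c = 0)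
    (hrβ : β ^ 3 - a * β ^ 2 - b * β - c = 0)
    (hrγ : γ ^ 3 - a * γ ^ 2 - b * γ - c = 0)
    (hβα : |β| < |α|) (hγα : |γ| < |α|)
    (J : ℕ → ℝ) (h0 : J 0 = 0) (h1 : J 1 = 1) (h2 : J 2 = a)
    (hrec : ∀ n, J (n + 3) = a * J (n + 2) + b * J (n + 1) + c * J n) :
    Filter.Tendsto (fun n => J (n + 1) / J n) Filter.atTop (nhds α) := by
  have hαβ' : α - β ≠ 0 := sub_ne_zero.mpr hαβ
  have hαγ' : α - γ ≠ 0 := sub_ne_zero.mpr hαγ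
  have hβγ' : β - γ ≠ 0 := sub_ne_zero.mpr hβγ
  have hβα' : β - α ≠ 0 := sub_ne_zero.mpr (Ne.symm hαβ)
  have hγα' : γ - α ≠ 0 := sub_ne_zero.mpr (Ne.symm hαγ)
  have hγβ' : γ - β ≠ 0 := sub_ne_zero.mpr (Ne.symm hβγ)
  have hα : α ≠ 0 := by
    intro h
    rw [h, abs_zero] at hβα
    exact absurd hβα (not_lt.mpr (abs_nonneg β))
  -- Vieta: a = α + β + γ
  have e1 : α^2 + α*β + β^2 - a*(α+β) - b = 0 := by
    have h : (α - β) * (α^2 + α*β + β^2 - a*(α+β) - b) = (α - β) * 0 := by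
      linear_combination hrα - hrβ
    exact mul_left_cancel₀ hαβ' h
  have e3 : α^2 + α*γ + γ^2 - a*(α+γ) - b = 0 := by
    have h : (α - γ) * (α^2 + α*γ + γ^2 - a*(α+γ) - b) = (α - γ) * 0 := by
      linear_combination hrα - hrγ
    exact mul_left_cancel₀ hαγ' h
  have ha : a = α + β + γ := by
    have h : (β - γ) * (α + β + γ - a) = (β - γ) * 0 := by
      linear_combination e1 - e3
    have := mul_left_cancel₀ hβγ' h
    linarith
  -- Binet coefficients
  set A : ℝ := 1 / ((α - β) * (α - γ)) with hAdef
  set B : ℝ := 1 / ((β - α) * (β - γ)) with hBdef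
  set C : ℝ := 1 / ((γ - α) * (γ - β)) with hCdef
  have hA : A ≠ 0 := by
    rw [hAdef]
    positivity
  have hf : ∀ n, J n = A * α ^ (n+1) + B * β ^ (n+1) + C * γ ^ (n+1) := by
    have base0 : J 0 = A * α ^ 1 + B * β ^ 1 + C * γ ^ 1 := by
      rw [h0, hAdef, hBdef, hCdef]; field_simp; ring
    have base1 : J 1 = A * α ^ 2 + B * β ^ 2 + C * γ ^ 2 := by
      rw [h1, hAdef, hBdef, hCdef]; field_simp; ring
    have base2 : J 2 = A * α ^ 3 + B * β ^ 3 + C * γ ^ 3 := by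
      rw [h2, ha, hAdef, hBdef, hCdef]; field_simp; ring
    have key : ∀ n, J n = A * α ^ (n+1) + B * β ^ (n+1) + C * γ ^ (n+1) ∧
        J (n+1) = A * α ^ (n+2) + B * β ^ (n+2) + C * γ ^ (n+2) ∧
        J (n+2) = A * α ^ (n+3) + B * β ^ (n+3) + C * γ ^ (n+3) := by
      intro n
      induction n with
      | zero => exact ⟨base0, base1, base2⟩
      | succ k ih =>
        obtain ⟨i0, i1, i2⟩ := ih
        refine ⟨i1, i2, ?_⟩
        rw [show k + 1 + 2 = k + 3 from rfl, hrec k, i0, i1, i2]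
        have pα : α ^ (k+4) = α ^ (k+1) * α ^ 3 := by ring
        have pβ : β ^ (k+4) = β ^ (k+1) * β ^ 3 := by ring
        have pγ : γ ^ (k+4) = γ ^ (k+1) * γ ^ 3 := by ring
        linear_combination (-(A * α ^ (k+1))) * hrα + (-(B * β ^ (k+1))) * hrβ +
          (-(C * γ ^ (k+1))) * hrγ
    exact fun n => (key n).1
  -- ratios
  set r : ℝ := β / α with hrdef
  set s : ℝ := γ / α with hsdef
  have hr : |r| < 1 := by
    rw [hrdef, abs_div]
    exact (div_lt_one (lt_of_le_of_lt (abs_nonneg β) hβα)).mpr hβα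
  have hs : |s| < 1 := by
    rw [hsdef, abs_div]
    exact (div_lt_one (lt_of_le_of_lt (abs_nonneg γ) hγα)).mpr hγα
  set g : ℕ → ℝ := fun n => A + B * r ^ n + C * s ^ n with hgdef
  have hβr : β = r * α := by rw [hrdef]; field_simp
  have hγs : γ = s * α := by rw [hsdef]; field_simp
  have hJg : ∀ n, J n = α ^ (n+1) * g (n+1) := by
    intro n
    rw [hf n, hgdef, hβr, hγs]
    ring
  have hg : Filter.Tendsto g Filter.atTop (nhds A) := by
    have h1 : Filter.Tendsto (fun n : ℕ => r ^ n) Filter.atTop (nhds 0) :=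
      tendsto_pow_atTop_nhds_zero_of_abs_lt_one hr
    have h2 : Filter.Tendsto (fun n : ℕ => s ^ n) Filter.atTop (nhds 0) :=
      tendsto_pow_atTop_nhds_zero_of_abs_lt_one hs
    have := ((tendsto_const_nhds (x := A)).add (h1.const_mul B)).add (h2.const_mul C)
    simpa using this
  have hg1 : Filter.Tendsto (fun n => g (n+1)) Filter.atTop (nhds A) :=
    hg.comp (Filter.tendsto_add_atTop_nat 1)
  have hg2 : Filter.Tendsto (fun n => g (n+2)) Filter.atTop (nhds A) :=
    hg.comp (Filter.tendsto_add_atTop_nat 2)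
  have hev : ∀ᶠ n in Filter.atTop, g (n+1) ≠ 0 := hg1.eventually_ne hA
  have heq : (fun n => α * (g (n+2) / g (n+1))) =ᶠ[Filter.atTop]
      (fun n => J (n+1) / J n) := by
    filter_upwards [hev] with n hn
    rw [hJg n, hJg (n+1)]
    symm
    rw [show n + 1 + 1 = n + 2 from rfl]
    have hpow : (α : ℝ) ^ (n+1) ≠ 0 := pow_ne_zero _ hα
    field_simp
    ring
  have hlim : Filter.Tendsto (fun n => α * (g (n+2) / g (n+1)))
      Filter.atTop (nhds α) := by
    have hdiv : Filter.Tendsto (fun n => g (n+2) / g (n+1)) Filter.atTop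
        (nhds (A / A)) := hg2.div hg1 hA
    rw [div_self hA] at hdiv
    have := hdiv.const_mul α
    simpa using this
  exact hlim.congr' heq
end

section
/- Let S : ℕ → ℝ satisfy S(n+3) = -a·S(n+2) + b·S(n+1) - c·S(n) (with S(0), S(1), S(2) as initial values), and let J be the sequence with J(n+3) = a·J(n+2) + b·J(n+1) + c·J(n), J(0)=0, J(1)=1, J(2)=a. Then for all n, S(n+2) = (-1)^n·(c·J(n)·S(0) - (J(n+2) - a·J(n+1))·S(1) + J(n+1)·S(2)). -/
theorem stmt6 (a b c : ℝ) (S J : ℕ → ℝ)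
    (hSrec : ∀ n, S (n + 3) = -a * S (n + 2) + b * S (n + 1) - c * S n)
    (hJ0 : J 0 = 0) (hJ1 : J 1 = 1) (hJ2 : J 2 = a)
    (hJrec : ∀ n, J (n + 3) = a * J (n + 2) + b * J (n + 1) + c * J n) :
    ∀ n : ℕ, S (n + 2) = (-1 : ℝ) ^ n *
      (c * J n * S 0 - (J (n + 2) - a * J (n + 1)) * S 1 + J (n + 1) * S 2) := by
  set P : ℕ → Prop := fun n => S (n + 2) = (-1 : ℝ) ^ n *
      (c * J n * S 0 - (J (n + 2) - a * J (n + 1)) * S 1 + J (n + 1) * S 2) with hP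
  suffices h : ∀ n, P n ∧ P (n + 1) ∧ P (n + 2) by exact fun n => (h n).1
  intro n
  induction n with
  | zero =>
    refine ⟨?_, ?_, ?_⟩ <;> simp only [hP]
    · norm_num [hJ0, hJ1, hJ2]
    · rw [show (1:ℕ)+2 = 0+3 from rfl, hJrec, hSrec, show (1:ℕ)+1 = 2 from rfl]
      simp [hJ0, hJ1, hJ2]; ring
    · rw [show (2:ℕ)+2 = 1+3 from rfl, hJrec, show (1:ℕ)+2 = 0+3 from rfl, hJrec,
        hSrec, hSrec, show (1:ℕ)+1 = 2 from rfl]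
      simp [hJ0, hJ1, hJ2]; ring
  | succ n ih =>
    refine ⟨ih.2.1, ih.2.2, ?_⟩
    have h0 := ih.1
    have h1 := ih.2.1
    have h2 := ih.2.2
    simp only [hP] at h0 h1 h2 ⊢
    rw [show n+1+2 = n+3 from rfl, hJrec, show n+1+1 = n+2 from rfl] at h1
    rw [show n+2+2 = n+1+3 from rfl, hJrec, show n+1+2 = n+3 from rfl, hJrec,
        show n+1+1 = n+2 from rfl] at h2
    rw [show n+3+2 = n+2+3 from rfl, hSrec,
        show n+3+2 = n+2+3 from rfl, hJrec,
        show n+2+2 = n+1+3 from rfl, hJrec,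
        show n+3+1 = n+1+3 from rfl, hJrec,
        show n+1+1 = n+2 from rfl]
    simp only [hJrec]
    rw [h0, h1, h2]
    ring
end

section
/- Suppose (x_n), (y_n) (indexed so that x_{-1}, x_0, y_{-1}, y_0 are given nonzero reals) satisfy x_{n+1} = (a·y_n·x_{n-1} + b·x_{n-1} + c)/(y_n·x_{n-1}) and y_{n+1} = (a·x_n·y_{n-1} + b·y_{n-1} + c)/(x_n·y_{n-1}) for all n ≥ 0, with all x_n, y_n nonzero and all denominators in the closed-form expressions below nonzero. Then for all n ≥ 0: x_{2n+1} = (c·J_{2n+1} + (J_{2n+3} - a·J_{2n+2})·x_{-1} + J_{2n+2}·x_{-1}·y_0) / (c·J_{2n} + (J_{2n+2} - a·J_{2n+1})·x_{-1} + J_{2n+1}·x_{-1}·y_0), where J is the sequence with J(n+3) = a·J(n+2) + b·J(n+1) + c·J(n), J(0)=0, J(1)=1, J(2)=a. -/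
/-- Interleaved sequence: `x` at even indices, `y` at odd indices. -/
noncomputable def wseq (x y : ℕ → ℝ) (n : ℕ) : ℝ := if n % 2 = 0 then x n else y n

/-- Partial products of `wseq`. -/
noncomputable def Pseq (x y : ℕ → ℝ) : ℕ → ℝ
  | 0 => x 0
  | n + 1 => wseq x y (n + 1) * Pseq x y n

/- Sequences are shifted: `x 0` plays the role of `x₋₁`, `x 1` of `x₀`, etc.,
so `x_{2n+1}` is `x (2n+2)`. -/
theorem stmt7 (a b c : ℝ) (hc : c ≠ 0)
    (J : ℕ → ℝ) (hJ0 : J 0 = 0) (hJ1 : J 1 = 1) (hJ2 : J 2 = a)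
    (hJrec : ∀ n, J (n + 3) = a * J (n + 2) + b * J (n + 1) + c * J n)
    (x y : ℕ → ℝ) (hx : ∀ n, x n ≠ 0) (hy : ∀ n, y n ≠ 0)
    (hxrec : ∀ n, x (n + 2) = (a * y (n + 1) * x n + b * x n + c) / (y (n + 1) * x n))
    (hyrec : ∀ n, y (n + 2) = (a * x (n + 1) * y n + b * y n + c) / (x (n + 1) * y n))
    (hden : ∀ n, c * J (2 * n) + (J (2 * n + 2) - a * J (2 * n + 1)) * x 0
      + J (2 * n + 1) * x 0 * y 1 ≠ 0) :
    ∀ n : ℕ, x (2 * n + 2) =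
      (c * J (2 * n + 1) + (J (2 * n + 3) - a * J (2 * n + 2)) * x 0
        + J (2 * n + 2) * x 0 * y 1) /
      (c * J (2 * n) + (J (2 * n + 2) - a * J (2 * n + 1)) * x 0
        + J (2 * n + 1) * x 0 * y 1) := by
  set w := wseq x y with hwdef
  set P := Pseq x y with hPdef
  have hwne : ∀ n, w n ≠ 0 := by
    intro n
    simp only [hwdef, wseq]
    split <;> [exact hx n; exact hy n]
  have hPne : ∀ n, P n ≠ 0 := by
    intro n
    induction n with
    | zero => simpa [hPdef, Pseq] using hx 0
    | succ k ih =>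
      have : P (k + 1) = w (k + 1) * P k := rfl
      rw [this]
      exact mul_ne_zero (hwne _) ih
  -- key multiplicative relation on w
  have hxm : ∀ m, x (m + 2) * (y (m + 1) * x m) = a * y (m + 1) * x m + b * x m + c := by
    intro m
    rw [hxrec m, div_mul_cancel₀]
    exact mul_ne_zero (hy _) (hx _)
  have hym : ∀ m, y (m + 2) * (x (m + 1) * y m) = a * x (m + 1) * y m + b * y m + c := by
    intro m
    rw [hyrec m, div_mul_cancel₀]
    exact mul_ne_zero (hx _) (hy _)
  have hw3 : ∀ m, w (m + 2) * w (m + 1) * w m = a * (w (m + 1) * w m) + b * w m + c := by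
    intro m
    rcases Nat.even_or_odd m with ⟨k, hk⟩ | ⟨k, hk⟩
    · have h0 : m % 2 = 0 := by omega
      have h1 : (m + 1) % 2 = 1 := by omega
      have h2 : (m + 2) % 2 = 0 := by omega
      simp only [hwdef, wseq, h0, h1, h2, reduceIte, Nat.one_ne_zero]
      linear_combination hxm m
    · have h0 : m % 2 = 1 := by omega
      have h1 : (m + 1) % 2 = 0 := by omega
      have h2 : (m + 2) % 2 = 1 := by omega
      simp only [hwdef, wseq, h0, h1, h2, reduceIte, Nat.one_ne_zero]
      linear_combination hym m
  -- P satisfies the tribonacci-type recurrence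
  have hPrec : ∀ n, P (n + 3) = a * P (n + 2) + b * P (n + 1) + c * P n := by
    intro n
    have e1 : P (n + 1) = w (n + 1) * P n := rfl
    have e2 : P (n + 2) = w (n + 2) * P (n + 1) := rfl
    have e3 : P (n + 3) = w (n + 3) * P (n + 2) := rfl
    have key := hw3 (n + 1)
    simp only [show n + 1 + 2 = n + 3 from by ring, show n + 1 + 1 = n + 2 from by ring] at key
    rw [e3, e2, e1]
    linear_combination P n * key
  -- closed form F
  set F : ℕ → ℝ := fun n => c * J n + (J (n + 2) - a * J (n + 1)) * x 0 + J (n + 1) * x 0 * y 1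
    with hFdef
  have hFrec : ∀ n, F (n + 3) = a * F (n + 2) + b * F (n + 1) + c * F n := by
    intro n
    have r0 := hJrec n
    have r1 := hJrec (n + 1)
    have r2 := hJrec (n + 2)
    simp only [show n + 1 + 3 = n + 4 from by ring, show n + 1 + 2 = n + 3 from by ring,
      show n + 1 + 1 = n + 2 from by ring, show n + 2 + 3 = n + 5 from by ring,
      show n + 2 + 2 = n + 4 from by ring, show n + 2 + 1 = n + 3 from by ring] at r1 r2
    simp only [hFdef, show n + 3 + 2 = n + 5 from by ring, show n + 3 + 1 = n + 4 from by ring,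
      show n + 2 + 2 = n + 4 from by ring, show n + 2 + 1 = n + 3 from by ring,
      show n + 1 + 2 = n + 3 from by ring, show n + 1 + 1 = n + 2 from by ring]
    linear_combination c * r0 + x 0 * r2 - a * x 0 * r1 + x 0 * y 1 * r1
  -- base values of P
  have hP0 : P 0 = x 0 := rfl
  have hP1 : P 1 = y 1 * x 0 := by
    have : P 1 = w 1 * P 0 := rfl
    rw [this, hP0]
    simp [hwdef, wseq]
  have hP2 : P 2 = a * x 0 * y 1 + b * x 0 + c := by
    have : P 2 = w 2 * P 1 := rfl
    rw [this, hP1]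
    have hw2 : w 2 = x 2 := by simp [hwdef, wseq]
    rw [hw2]
    linear_combination hxm 0
  -- P (n+1) = F n, by induction carrying a triple
  have hPF : ∀ n, P (n + 1) = F n := by
    have key : ∀ n, P (n + 1) = F n ∧ P (n + 2) = F (n + 1) ∧ P (n + 3) = F (n + 2) := by
      intro n
      induction n with
      | zero =>
        have j3 := hJrec 0
        have j4 := hJrec 1
        refine ⟨?_, ?_, ?_⟩
        · rw [hP1]; simp only [hFdef]; rw [hJ0, hJ1, hJ2]; ring
        · rw [hP2]; simp only [hFdef]
          norm_num at j3 ⊢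
          rw [j3, hJ1, hJ2, hJ0]; ring
        · rw [hPrec 0, hP0, hP1, hP2]
          simp only [hFdef]
          norm_num at j3 j4 ⊢
          rw [j4, j3, hJ0, hJ1, hJ2]; ring
      | succ k ih =>
        obtain ⟨i1, i2, i3⟩ := ih
        refine ⟨?_, ?_, ?_⟩
        · simpa [show k + 1 + 1 = k + 2 from by ring] using i2
        · simpa [show k + 1 + 2 = k + 3 from by ring, show k + 1 + 1 = k + 2 from by ring]
            using i3
        · have : P (k + 4) = a * P (k + 3) + b * P (k + 2) + c * P (k + 1) := hPrec (k + 1)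
          simp only [show k + 1 + 3 = k + 4 from by ring, show k + 1 + 2 = k + 3 from by ring]
          rw [this, i1, i2, i3, hFrec k]
    intro n
    exact (key n).1
  intro n
  have hA : P (2 * n + 1) = F (2 * n) := hPF (2 * n)
  have hB : P (2 * n + 2) = F (2 * n + 1) := by
    have := hPF (2 * n + 1)
    simpa [show 2 * n + 1 + 1 = 2 * n + 2 from by ring] using this
  have hstep : P (2 * n + 2) = x (2 * n + 2) * P (2 * n + 1) := by
    have : P (2 * n + 2) = w (2 * n + 2) * P (2 * n + 1) := rfl
    rw [this]
    have : w (2 * n + 2) = x (2 * n + 2) := by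
      simp only [hwdef, wseq]
      rw [if_pos (by omega)]
    rw [this]
  have hdenF : F (2 * n) ≠ 0 := hden n
  have hxval : x (2 * n + 2) * F (2 * n) = F (2 * n + 1) := by
    rw [← hA, ← hB, hstep]
  have hF2n : F (2 * n) = c * J (2 * n) + (J (2 * n + 2) - a * J (2 * n + 1)) * x 0
      + J (2 * n + 1) * x 0 * y 1 := rfl
  have hF2n1 : F (2 * n + 1) = c * J (2 * n + 1) + (J (2 * n + 3) - a * J (2 * n + 2)) * x 0
      + J (2 * n + 2) * x 0 * y 1 := by
    simp only [hFdef, show 2 * n + 1 + 2 = 2 * n + 3 from by ring,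
      show 2 * n + 1 + 1 = 2 * n + 2 from by ring]
  rw [← hF2n, ← hF2n1, eq_div_iff hdenF]
  exact hxval
end

section
/- Under the same hypotheses as for the odd-index formula, for all n ≥ 0: x_{2n+2} = (c·J_{2n+2} + (J_{2n+4} - a·J_{2n+3})·y_{-1} + J_{2n+3}·x_0·y_{-1}) / (c·J_{2n+1} + (J_{2n+3} - a·J_{2n+2})·y_{-1} + J_{2n+2}·x_0·y_{-1}), and symmetric formulas hold for y_{2n+1} and y_{2n+2} with the roles of (x_{-1}, y_0) and (y_{-1}, x_0) interchanged. -/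
/-- Auxiliary sequence for the x-odd / y-even formulas (u = y₋₁, v = x₀). -/
def stmt8F (a c : ℝ) (J : ℕ → ℝ) (u v : ℝ) (k : ℕ) : ℝ :=
  c * J k + (J (k + 2) - a * J (k + 1)) * u + J (k + 1) * v * u

/-- Auxiliary sequence for the y-odd / x-even formulas (u = x₋₁, v = y₀). -/
def stmt8G (a c : ℝ) (J : ℕ → ℝ) (u v : ℝ) (k : ℕ) : ℝ :=
  c * J k + (J (k + 2) - a * J (k + 1)) * u + J (k + 1) * u * v

theorem stmt8F_rec (a b c u v : ℝ) (J : ℕ → ℝ)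
    (hJrec : ∀ n, J (n + 3) = a * J (n + 2) + b * J (n + 1) + c * J n) (k : ℕ) :
    stmt8F a c J u v (k + 3)
      = a * stmt8F a c J u v (k + 2) + b * stmt8F a c J u v (k + 1) + c * stmt8F a c J u v k := by
  have h1 : J (k + 3) = a * J (k + 2) + b * J (k + 1) + c * J k := hJrec k
  have h2 : J (k + 4) = a * J (k + 3) + b * J (k + 2) + c * J (k + 1) := hJrec (k + 1)
  have h3 : J (k + 5) = a * J (k + 4) + b * J (k + 3) + c * J (k + 2) := hJrec (k + 2)
  show c * J (k + 3) + (J (k + 5) - a * J (k + 4)) * u + J (k + 4) * v * u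
      = a * (c * J (k + 2) + (J (k + 4) - a * J (k + 3)) * u + J (k + 3) * v * u)
        + b * (c * J (k + 1) + (J (k + 3) - a * J (k + 2)) * u + J (k + 2) * v * u)
        + c * (c * J k + (J (k + 2) - a * J (k + 1)) * u + J (k + 1) * v * u)
  rw [h3, h2, h1]; ring

theorem stmt8G_rec (a b c u v : ℝ) (J : ℕ → ℝ)
    (hJrec : ∀ n, J (n + 3) = a * J (n + 2) + b * J (n + 1) + c * J n) (k : ℕ) :
    stmt8G a c J u v (k + 3)
      = a * stmt8G a c J u v (k + 2) + b * stmt8G a c J u v (k + 1) + c * stmt8G a c J u v k := by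
  have h1 : J (k + 3) = a * J (k + 2) + b * J (k + 1) + c * J k := hJrec k
  have h2 : J (k + 4) = a * J (k + 3) + b * J (k + 2) + c * J (k + 1) := hJrec (k + 1)
  have h3 : J (k + 5) = a * J (k + 4) + b * J (k + 3) + c * J (k + 2) := hJrec (k + 2)
  show c * J (k + 3) + (J (k + 5) - a * J (k + 4)) * u + J (k + 4) * u * v
      = a * (c * J (k + 2) + (J (k + 4) - a * J (k + 3)) * u + J (k + 3) * u * v)
        + b * (c * J (k + 1) + (J (k + 3) - a * J (k + 2)) * u + J (k + 2) * u * v)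
        + c * (c * J k + (J (k + 2) - a * J (k + 1)) * u + J (k + 1) * u * v)
  rw [h3, h2, h1]; ring

/-- Key step lemma. -/
theorem stmt8key (a b c f0 f1 f2 f3 u v : ℝ) (h0 : f0 ≠ 0) (h1 : f1 ≠ 0) (h2 : f2 ≠ 0)
    (hf : f3 = a * f2 + b * f1 + c * f0) (hu : u = f1 / f0) (hv : v = f2 / f1) :
    (a * v * u + b * u + c) / (v * u) = f3 / f2 := by
  subst hu hv hf
  field_simp
  try ring

theorem stmt8 (a b c : ℝ) (hc : c ≠ 0)
    (J : ℕ → ℝ) (hJ0 : J 0 = 0) (hJ1 : J 1 = 1) (hJ2 : J 2 = a)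
    (hJrec : ∀ n, J (n + 3) = a * J (n + 2) + b * J (n + 1) + c * J n)
    (x y : ℕ → ℝ) (hx : ∀ n, x n ≠ 0) (hy : ∀ n, y n ≠ 0)
    (hxrec : ∀ n, x (n + 2) = (a * y (n + 1) * x n + b * x n + c) / (y (n + 1) * x n))
    (hyrec : ∀ n, y (n + 2) = (a * x (n + 1) * y n + b * y n + c) / (x (n + 1) * y n))
    (hden1 : ∀ n, c * J (2 * n + 1) + (J (2 * n + 3) - a * J (2 * n + 2)) * y 0
      + J (2 * n + 2) * x 1 * y 0 ≠ 0)
    (hden2 : ∀ n, c * J (2 * n) + (J (2 * n + 2) - a * J (2 * n + 1)) * y 0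
      + J (2 * n + 1) * x 1 * y 0 ≠ 0)
    (hden3 : ∀ n, c * J (2 * n + 1) + (J (2 * n + 3) - a * J (2 * n + 2)) * x 0
      + J (2 * n + 2) * x 0 * y 1 ≠ 0) :
    ∀ n : ℕ,
      x (2 * n + 3) =
        (c * J (2 * n + 2) + (J (2 * n + 4) - a * J (2 * n + 3)) * y 0
          + J (2 * n + 3) * x 1 * y 0) /
        (c * J (2 * n + 1) + (J (2 * n + 3) - a * J (2 * n + 2)) * y 0
          + J (2 * n + 2) * x 1 * y 0) ∧
      y (2 * n + 2) =
        (c * J (2 * n + 1) + (J (2 * n + 3) - a * J (2 * n + 2)) * y 0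
          + J (2 * n + 2) * x 1 * y 0) /
        (c * J (2 * n) + (J (2 * n + 2) - a * J (2 * n + 1)) * y 0
          + J (2 * n + 1) * x 1 * y 0) ∧
      y (2 * n + 3) =
        (c * J (2 * n + 2) + (J (2 * n + 4) - a * J (2 * n + 3)) * x 0
          + J (2 * n + 3) * x 0 * y 1) /
        (c * J (2 * n + 1) + (J (2 * n + 3) - a * J (2 * n + 2)) * x 0
          + J (2 * n + 2) * x 0 * y 1) := by
  set F : ℕ → ℝ := stmt8F a c J (y 0) (x 1) with hFdef
  set G : ℕ → ℝ := stmt8G a c J (x 0) (y 1) with hGdef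
  have hF1 : ∀ m, F (2 * m + 1) ≠ 0 := hden1
  have hF0 : ∀ m, F (2 * m) ≠ 0 := hden2
  have hG1 : ∀ m, G (2 * m + 1) ≠ 0 := hden3
  have hFrec : ∀ k, F (k + 3) = a * F (k + 2) + b * F (k + 1) + c * F k :=
    stmt8F_rec a b c (y 0) (x 1) J hJrec
  have hGrec : ∀ k, G (k + 3) = a * G (k + 2) + b * G (k + 1) + c * G k :=
    stmt8G_rec a b c (x 0) (y 1) J hJrec
  have hJ3 : J 3 = a * a + b := by rw [hJrec 0, hJ0, hJ1, hJ2]; ring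
  have hJ4 : J 4 = a * (a * a + b) + b * a + c := by rw [hJrec 1, hJ1, hJ2, hJ3]; ring
  have hF0v : F 0 = x 1 * y 0 := by
    show c * J 0 + (J 2 - a * J 1) * y 0 + J 1 * x 1 * y 0 = _
    rw [hJ0, hJ1, hJ2]; ring
  have hG0v : G 0 = x 0 * y 1 := by
    show c * J 0 + (J 2 - a * J 1) * x 0 + J 1 * x 0 * y 1 = _
    rw [hJ0, hJ1, hJ2]; ring
  have hF0ne : F 0 ≠ 0 := hF0 0
  have hG0ne : G 0 ≠ 0 := by rw [hG0v]; exact mul_ne_zero (hx 0) (hy 1)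
  have hF1v : F 1 = a * F 0 + b * y 0 + c * 1 := by
    show c * J 1 + (J 3 - a * J 2) * y 0 + J 2 * x 1 * y 0
        = a * (c * J 0 + (J 2 - a * J 1) * y 0 + J 1 * x 1 * y 0) + b * y 0 + c * 1
    rw [hJ0, hJ1, hJ2, hJ3]; ring
  have hG1v : G 1 = a * G 0 + b * x 0 + c * 1 := by
    show c * J 1 + (J 3 - a * J 2) * x 0 + J 2 * x 0 * y 1
        = a * (c * J 0 + (J 2 - a * J 1) * x 0 + J 1 * x 0 * y 1) + b * x 0 + c * 1
    rw [hJ0, hJ1, hJ2, hJ3]; ring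
  have hF2v : F 2 = a * F 1 + b * F 0 + c * y 0 := by
    show c * J 2 + (J 4 - a * J 3) * y 0 + J 3 * x 1 * y 0
        = a * (c * J 1 + (J 3 - a * J 2) * y 0 + J 2 * x 1 * y 0)
          + b * (c * J 0 + (J 2 - a * J 1) * y 0 + J 1 * x 1 * y 0) + c * y 0
    rw [hJ0, hJ1, hJ2, hJ3, hJ4]; ring
  have hG2v : G 2 = a * G 1 + b * G 0 + c * x 0 := by
    show c * J 2 + (J 4 - a * J 3) * x 0 + J 3 * x 0 * y 1
        = a * (c * J 1 + (J 3 - a * J 2) * x 0 + J 2 * x 0 * y 1)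
          + b * (c * J 0 + (J 2 - a * J 1) * x 0 + J 1 * x 0 * y 1) + c * x 0
    rw [hJ0, hJ1, hJ2, hJ3, hJ4]; ring
  have hx1F : x 1 = F 0 / y 0 := by
    rw [hF0v, mul_div_assoc, div_self (hy 0), mul_one]
  have hy1G : y 1 = G 0 / x 0 := by
    rw [hG0v, mul_comm, mul_div_assoc, div_self (hx 0), mul_one]
  -- base values
  have hy2 : y 2 = F 1 / F 0 := by
    have h : y 2 = (a * x 1 * y 0 + b * y 0 + c) / (x 1 * y 0) := hyrec 0
    rw [h]
    exact stmt8key a b c 1 (y 0) (F 0) (F 1) (y 0) (x 1)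
      one_ne_zero (hy 0) hF0ne hF1v (div_one (y 0)).symm hx1F
  have hx2 : x 2 = G 1 / G 0 := by
    have h : x 2 = (a * y 1 * x 0 + b * x 0 + c) / (y 1 * x 0) := hxrec 0
    rw [h]
    exact stmt8key a b c 1 (x 0) (G 0) (G 1) (x 0) (y 1)
      one_ne_zero (hx 0) hG0ne hG1v (div_one (x 0)).symm hy1G
  have hx3 : x 3 = F 2 / F 1 := by
    have h : x 3 = (a * y 2 * x 1 + b * x 1 + c) / (y 2 * x 1) := hxrec 1
    rw [h]
    exact stmt8key a b c (y 0) (F 0) (F 1) (F 2) (x 1) (y 2)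
      (hy 0) hF0ne (hF1 0) hF2v hx1F hy2
  have hy3 : y 3 = G 2 / G 1 := by
    have h : y 3 = (a * x 2 * y 1 + b * y 1 + c) / (x 2 * y 1) := hyrec 1
    rw [h]
    exact stmt8key a b c (x 0) (G 0) (G 1) (G 2) (y 1) (x 2)
      (hx 0) hG0ne (hG1 0) hG2v hy1G hx2
  have main : ∀ n, x (2 * n + 3) = F (2 * n + 2) / F (2 * n + 1)
      ∧ y (2 * n + 2) = F (2 * n + 1) / F (2 * n)
      ∧ y (2 * n + 3) = G (2 * n + 2) / G (2 * n + 1)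
      ∧ x (2 * n + 2) = G (2 * n + 1) / G (2 * n)
      ∧ G (2 * n) ≠ 0 := by
    intro n
    induction n with
    | zero => exact ⟨hx3, hy2, hy3, hx2, hG0ne⟩
    | succ n ih =>
      obtain ⟨ihx3, ihy2, ihy3, ihx2, ihG0⟩ := ih
      have hF0n : F (2 * n) ≠ 0 := hF0 n
      have hF1n : F (2 * n + 1) ≠ 0 := hF1 n
      have hF2n : F (2 * n + 2) ≠ 0 := hF0 (n + 1)
      have hF3n : F (2 * n + 3) ≠ 0 := hF1 (n + 1)
      have hG1n : G (2 * n + 1) ≠ 0 := hG1 n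
      have hG2n : G (2 * n + 2) ≠ 0 := by
        intro h0
        exact hy (2 * n + 3) (by rw [ihy3, h0, zero_div])
      have hG3n : G (2 * n + 3) ≠ 0 := hG1 (n + 1)
      have hy4 : y (2 * n + 4) = F (2 * n + 3) / F (2 * n + 2) := by
        have h : y (2 * n + 4)
            = (a * x (2 * n + 3) * y (2 * n + 2) + b * y (2 * n + 2) + c)
              / (x (2 * n + 3) * y (2 * n + 2)) := hyrec (2 * n + 2)
        rw [h]
        exact stmt8key a b c (F (2 * n)) (F (2 * n + 1)) (F (2 * n + 2)) (F (2 * n + 3))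
          (y (2 * n + 2)) (x (2 * n + 3)) hF0n hF1n hF2n (hFrec (2 * n)) ihy2 ihx3
      have hx5 : x (2 * n + 5) = F (2 * n + 4) / F (2 * n + 3) := by
        have h : x (2 * n + 5)
            = (a * y (2 * n + 4) * x (2 * n + 3) + b * x (2 * n + 3) + c)
              / (y (2 * n + 4) * x (2 * n + 3)) := hxrec (2 * n + 3)
        rw [h]
        exact stmt8key a b c (F (2 * n + 1)) (F (2 * n + 2)) (F (2 * n + 3)) (F (2 * n + 4))
          (x (2 * n + 3)) (y (2 * n + 4)) hF1n hF2n hF3n (hFrec (2 * n + 1)) ihx3 hy4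
      have hx4 : x (2 * n + 4) = G (2 * n + 3) / G (2 * n + 2) := by
        have h : x (2 * n + 4)
            = (a * y (2 * n + 3) * x (2 * n + 2) + b * x (2 * n + 2) + c)
              / (y (2 * n + 3) * x (2 * n + 2)) := hxrec (2 * n + 2)
        rw [h]
        exact stmt8key a b c (G (2 * n)) (G (2 * n + 1)) (G (2 * n + 2)) (G (2 * n + 3))
          (x (2 * n + 2)) (y (2 * n + 3)) ihG0 hG1n hG2n (hGrec (2 * n)) ihx2 ihy3
      have hy5 : y (2 * n + 5) = G (2 * n + 4) / G (2 * n + 3) := by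
        have h : y (2 * n + 5)
            = (a * x (2 * n + 4) * y (2 * n + 3) + b * y (2 * n + 3) + c)
              / (x (2 * n + 4) * y (2 * n + 3)) := hyrec (2 * n + 3)
        rw [h]
        exact stmt8key a b c (G (2 * n + 1)) (G (2 * n + 2)) (G (2 * n + 3)) (G (2 * n + 4))
          (y (2 * n + 3)) (x (2 * n + 4)) hG1n hG2n hG3n (hGrec (2 * n + 1)) ihy3 hx4
      exact ⟨hx5, hy4, hy5, hx4, hG2n⟩
  intro n
  obtain ⟨h1, h2, h3, _, _⟩ := main n
  exact ⟨h1, h2, h3⟩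
end

section
/- Suppose (x_n), (y_n) is a well-defined solution of x_{n+1} = (a·y_n·x_{n-1} + b·x_{n-1} + c)/(y_n·x_{n-1}), y_{n+1} = (a·x_n·y_{n-1} + b·y_{n-1} + c)/(x_n·y_{n-1}) with positive initial values, and suppose the characteristic equation λ³ - aλ² - bλ - c = 0 has three pairwise distinct real roots α, β, γ with |β| < |α|, |γ| < |α|, and the limiting denominators c + (α² - aα)·x_{-1} + α·y_0·x_{-1} and its analogues are nonzero. Then x_n → α and y_n → α as n → ∞. -/
open Filter

lemma vieta3 {a b c α β γ : ℝ}
    (hαβ : α ≠ β) (hαγ : α ≠ γ) (hβγ : β ≠ γ)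
    (hrα : α ^ 3 - a * α ^ 2 - b * α - c = 0)
    (hrβ : β ^ 3 - a * β ^ 2 - b * β - c = 0)
    (hrγ : γ ^ 3 - a * γ ^ 2 - b * γ - c = 0) :
    a = α + β + γ ∧ b = -(α*β + α*γ + β*γ) ∧ c = α*β*γ := by
  have h1 : (α - β) ≠ 0 := sub_ne_zero.mpr hαβ
  have h2 : (α - γ) ≠ 0 := sub_ne_zero.mpr hαγ
  have h3 : (β - γ) ≠ 0 := sub_ne_zero.mpr hβγ
  have ha : a = α + β + γ := by
    have key : (a - (α + β + γ)) * ((α - β) * ((β - γ) * (α - γ))) = 0 := by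
      linear_combination -(β - γ) * hrα + (α - γ) * hrβ - (α - β) * hrγ
    have := (mul_eq_zero.mp key).resolve_right
      (mul_ne_zero h1 (mul_ne_zero h3 h2))
    linarith
  have hb : b = -(α*β + α*γ + β*γ) := by
    have key : (b + (α*β + α*γ + β*γ)) * (α - β) = 0 := by
      linear_combination -hrα + hrβ - (α^2 - β^2) * ha
    have := (mul_eq_zero.mp key).resolve_right h1
    linarith
  have hcv : c = α*β*γ := by
    linear_combination -hrα - α^2 * ha - α * hb
  exact ⟨ha, hb, hcv⟩

lemma auxconv (a b c α β γ : ℝ) (hc : c ≠ 0)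
    (hαβ : α ≠ β) (hαγ : α ≠ γ) (hβγ : β ≠ γ)
    (hrα : α ^ 3 - a * α ^ 2 - b * α - c = 0)
    (hrβ : β ^ 3 - a * β ^ 2 - b * β - c = 0)
    (hrγ : γ ^ 3 - a * γ ^ 2 - b * γ - c = 0)
    (hβα : |β| < |α|) (hγα : |γ| < |α|)
    (z : ℕ → ℝ) (hz : ∀ n, z n ≠ 0)
    (hrec : ∀ n, z (n + 2) = (a * z (n + 1) * z n + b * z n + c) / (z (n + 1) * z n))
    (hden : c + (α ^ 2 - a * α) * z 0 + α * z 1 * z 0 ≠ 0) :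
    Tendsto z atTop (nhds α) := by
  obtain ⟨ha, hb, hcv⟩ := vieta3 hαβ hαγ hβγ hrα hrβ hrγ
  have hα0 : α ≠ 0 := by rintro rfl; exact hc (by rw [hcv]; ring)
  have h1 : (α - β) ≠ 0 := sub_ne_zero.mpr hαβ
  have h2 : (α - γ) ≠ 0 := sub_ne_zero.mpr hαγ
  have h3 : (β - γ) ≠ 0 := sub_ne_zero.mpr hβγ
  have h1' : (β - α) ≠ 0 := sub_ne_zero.mpr (Ne.symm hαβ)
  have h2' : (γ - α) ≠ 0 := sub_ne_zero.mpr (Ne.symm hαγ)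
  have h3' : (γ - β) ≠ 0 := sub_ne_zero.mpr (Ne.symm hβγ)
  obtain ⟨p, hpdef⟩ : ∃ p : ℕ → ℝ, p = fun n => ∏ i ∈ Finset.range n, z i := ⟨_, rfl⟩
  have hpsucc : ∀ n, p (n + 1) = p n * z n := by
    intro n; rw [hpdef]; exact Finset.prod_range_succ _ _
  have hpne : ∀ n, p n ≠ 0 := by
    intro n; rw [hpdef]; exact Finset.prod_ne_zero_iff.mpr fun i _ => hz i
  have hp0 : p 0 = 1 := by rw [hpdef]; exact Finset.prod_range_zero _
  have hp1 : p 1 = z 0 := by rw [hpsucc, hp0, one_mul]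
  have hp2 : p 2 = z 0 * z 1 := by rw [hpsucc, hp1]
  have hprec : ∀ n, p (n + 3) = a * p (n + 2) + b * p (n + 1) + c * p n := by
    intro n
    have e1 : p (n + 1) = p n * z n := hpsucc n
    have e2 : p (n + 2) = p (n + 1) * z (n + 1) := hpsucc (n + 1)
    have e3 : p (n + 3) = p (n + 2) * z (n + 2) := hpsucc (n + 2)
    rw [e3, hrec n, e2, e1]
    field_simp [hz n, hz (n + 1)]
  obtain ⟨A, hA⟩ : ∃ A : ℝ,
      A = (z 0 * z 1 - (β + γ) * z 0 + β * γ) / ((α - β) * (α - γ)) := ⟨_, rfl⟩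
  obtain ⟨B, hB⟩ : ∃ B : ℝ,
      B = (z 0 * z 1 - (α + γ) * z 0 + α * γ) / ((β - α) * (β - γ)) := ⟨_, rfl⟩
  obtain ⟨C, hC⟩ : ∃ C : ℝ,
      C = (z 0 * z 1 - (α + β) * z 0 + α * β) / ((γ - α) * (γ - β)) := ⟨_, rfl⟩
  have hform : ∀ n, p n = A * α ^ n + B * β ^ n + C * γ ^ n := by
    have key : ∀ n, p n = A * α ^ n + B * β ^ n + C * γ ^ n ∧
        p (n+1) = A * α ^ (n+1) + B * β ^ (n+1) + C * γ ^ (n+1) ∧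
        p (n+2) = A * α ^ (n+2) + B * β ^ (n+2) + C * γ ^ (n+2) := by
      intro n
      induction n with
      | zero =>
        refine ⟨?_, ?_, ?_⟩
        · rw [hp0, hA, hB, hC]; field_simp [h1, h2, h3, h1', h2', h3']; ring
        · rw [hp1, hA, hB, hC]; field_simp [h1, h2, h3, h1', h2', h3']; ring
        · rw [hp2, hA, hB, hC]; field_simp [h1, h2, h3, h1', h2', h3']; ring
      | succ n ih =>
        obtain ⟨ih0, ih1, ih2⟩ := ih
        refine ⟨ih1, ih2, ?_⟩
        rw [hprec n]
        linear_combination a * ih2 + b * ih1 + c * ih0 - A * α ^ n * hrα -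
          B * β ^ n * hrβ - C * γ ^ n * hrγ
    exact fun n => (key n).1
  have hAne : A ≠ 0 := by
    have hnum : α * (z 0 * z 1 - (β + γ) * z 0 + β * γ)
        = c + (α ^ 2 - a * α) * z 0 + α * z 1 * z 0 := by
      rw [ha, hcv]; ring
    rw [hA]
    refine div_ne_zero ?_ (mul_ne_zero h1 h2)
    intro h
    apply hden
    rw [← hnum, h, mul_zero]
  have hαpos : 0 < |α| := lt_of_le_of_lt (abs_nonneg β) hβα
  have t1 : Tendsto (fun n => (β / α) ^ n) atTop (nhds 0) := by
    apply tendsto_pow_atTop_nhds_zero_of_abs_lt_one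
    rw [abs_div, div_lt_one hαpos]; exact hβα
  have t2 : Tendsto (fun n => (γ / α) ^ n) atTop (nhds 0) := by
    apply tendsto_pow_atTop_nhds_zero_of_abs_lt_one
    rw [abs_div, div_lt_one hαpos]; exact hγα
  have hfeq : ∀ n, p n / α ^ n = A + B * (β / α) ^ n + C * (γ / α) ^ n := by
    intro n
    have hαn : (α : ℝ) ^ n ≠ 0 := pow_ne_zero n hα0
    rw [hform n, div_pow, div_pow]
    field_simp
  have hf : Tendsto (fun n => p n / α ^ n) atTop (nhds A) := by
    have h' : Tendsto (fun n => A + B * (β / α) ^ n + C * (γ / α) ^ n) atTop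
        (nhds (A + B * 0 + C * 0)) :=
      (tendsto_const_nhds.add (t1.const_mul B)).add (t2.const_mul C)
    simp only [mul_zero, add_zero] at h'
    exact Tendsto.congr (fun n => (hfeq n).symm) h'
  have hf1 : Tendsto (fun n => p (n + 1) / α ^ (n + 1)) atTop (nhds A) :=
    hf.comp (tendsto_add_atTop_nat 1)
  have hzeq : ∀ n, z n = α * (p (n + 1) / α ^ (n + 1)) / (p n / α ^ n) := by
    intro n
    rw [hpsucc n]
    have hpn := hpne n
    have hαn : (α : ℝ) ^ n ≠ 0 := pow_ne_zero n hα0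
    field_simp
    ring
  have hlim : Tendsto (fun n => α * (p (n + 1) / α ^ (n + 1)) / (p n / α ^ n))
      atTop (nhds (α * A / A)) := (hf1.const_mul α).div hf hAne
  rw [mul_div_assoc, div_self hAne, mul_one] at hlim
  exact Tendsto.congr (fun n => (hzeq n).symm) hlim

/- Sequences are shifted: `x 0` plays the role of `x₋₁`, `x 1` of `x₀`, etc. -/
theorem stmt10 (a b c α β γ : ℝ) (hc : c ≠ 0)
    (hαβ : α ≠ β) (hαγ : α ≠ γ) (hβγ : β ≠ γ)
    (hrα : α ^ 3 - a * α ^ 2 - b * α - c = 0)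
    (hrβ : β ^ 3 - a * β ^ 2 - b * β - c = 0)
    (hrγ : γ ^ 3 - a * γ ^ 2 - b * γ - c = 0)
    (hβα : |β| < |α|) (hγα : |γ| < |α|)
    (x y : ℕ → ℝ)
    (hx0 : 0 < x 0) (hx1 : 0 < x 1) (hy0 : 0 < y 0) (hy1 : 0 < y 1)
    (hx : ∀ n, x n ≠ 0) (hy : ∀ n, y n ≠ 0)
    (hxrec : ∀ n, x (n + 2) = (a * y (n + 1) * x n + b * x n + c) / (y (n + 1) * x n))
    (hyrec : ∀ n, y (n + 2) = (a * x (n + 1) * y n + b * y n + c) / (x (n + 1) * y n))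
    (hden1 : c + (α ^ 2 - a * α) * x 0 + α * y 1 * x 0 ≠ 0)
    (hden2 : c + (α ^ 2 - a * α) * y 0 + α * x 1 * y 0 ≠ 0) :
    Filter.Tendsto x Filter.atTop (nhds α) ∧
    Filter.Tendsto y Filter.atTop (nhds α) := by
  set z : ℕ → ℝ := fun n => if Even n then x n else y n with hzdef
  set w : ℕ → ℝ := fun n => if Even n then y n else x n with hwdef
  have hz0 : z 0 = x 0 := by simp [hzdef]
  have hz1 : z 1 = y 1 := by simp [hzdef]
  have hw0 : w 0 = y 0 := by simp [hwdef]
  have hw1 : w 1 = x 1 := by simp [hwdef]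
  have hzne : ∀ n, z n ≠ 0 := by
    intro n; rw [hzdef]; dsimp only; split_ifs
    · exact hx n
    · exact hy n
  have hwne : ∀ n, w n ≠ 0 := by
    intro n; rw [hwdef]; dsimp only; split_ifs
    · exact hy n
    · exact hx n
  have hzrec : ∀ n, z (n + 2) = (a * z (n + 1) * z n + b * z n + c) / (z (n + 1) * z n) := by
    intro n
    rcases Nat.even_or_odd n with he | ho
    · have h1 : Even (n + 2) := by
        rcases he with ⟨k, hk⟩; exact ⟨k + 1, by omega⟩
      have h2 : ¬ Even (n + 1) := by
        rcases he with ⟨k, hk⟩; rintro ⟨j, hj⟩; omega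
      simp only [hzdef, if_pos he, if_pos h1, if_neg h2]
      exact hxrec n
    · have h0 : ¬ Even n := Nat.not_even_iff_odd.mpr ho
      have h1 : ¬ Even (n + 2) := by
        rcases ho with ⟨k, hk⟩; rintro ⟨j, hj⟩; omega
      have h2 : Even (n + 1) := by
        rcases ho with ⟨k, hk⟩; exact ⟨k + 1, by omega⟩
      simp only [hzdef, if_neg h0, if_neg h1, if_pos h2]
      exact hyrec n
  have hwrec : ∀ n, w (n + 2) = (a * w (n + 1) * w n + b * w n + c) / (w (n + 1) * w n) := by
    intro n
    rcases Nat.even_or_odd n with he | ho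
    · have h1 : Even (n + 2) := by
        rcases he with ⟨k, hk⟩; exact ⟨k + 1, by omega⟩
      have h2 : ¬ Even (n + 1) := by
        rcases he with ⟨k, hk⟩; rintro ⟨j, hj⟩; omega
      simp only [hwdef, if_pos he, if_pos h1, if_neg h2]
      exact hyrec n
    · have h0 : ¬ Even n := Nat.not_even_iff_odd.mpr ho
      have h1 : ¬ Even (n + 2) := by
        rcases ho with ⟨k, hk⟩; rintro ⟨j, hj⟩; omega
      have h2 : Even (n + 1) := by
        rcases ho with ⟨k, hk⟩; exact ⟨k + 1, by omega⟩
      simp only [hwdef, if_neg h0, if_neg h1, if_pos h2]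
      exact hxrec n
  have hzlim : Filter.Tendsto z Filter.atTop (nhds α) :=
    auxconv a b c α β γ hc hαβ hαγ hβγ hrα hrβ hrγ hβα hγα z hzne hzrec
      (by rw [hz0, hz1]; exact hden1)
  have hwlim : Filter.Tendsto w Filter.atTop (nhds α) :=
    auxconv a b c α β γ hc hαβ hαγ hβγ hrα hrβ hrγ hβα hγα w hwne hwrec
      (by rw [hw0, hw1]; exact hden2)
  have hdz : Filter.Tendsto (fun n => dist (z n) α) Filter.atTop (nhds 0) :=
    tendsto_iff_dist_tendsto_zero.mp hzlim
  have hdw : Filter.Tendsto (fun n => dist (w n) α) Filter.atTop (nhds 0) :=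
    tendsto_iff_dist_tendsto_zero.mp hwlim
  have hsum : Filter.Tendsto (fun n => dist (z n) α + dist (w n) α)
      Filter.atTop (nhds 0) := by
    have := hdz.add hdw
    simpa using this
  constructor
  · apply tendsto_iff_dist_tendsto_zero.mpr
    apply squeeze_zero (fun n => dist_nonneg) _ hsum
    intro n
    rcases Nat.even_or_odd n with he | ho
    · have : x n = z n := by simp [hzdef, if_pos he]
      rw [this]
      exact le_add_of_nonneg_right dist_nonneg
    · have : x n = w n := by simp [hwdef, if_neg (Nat.not_even_iff_odd.mpr ho)]
      rw [this]
      exact le_add_of_nonneg_left dist_nonneg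
  · apply tendsto_iff_dist_tendsto_zero.mpr
    apply squeeze_zero (fun n => dist_nonneg) _ hsum
    intro n
    rcases Nat.even_or_odd n with he | ho
    · have : y n = w n := by simp [hwdef, if_pos he]
      rw [this]
      exact le_add_of_nonneg_left dist_nonneg
    · have : y n = z n := by simp [hzdef, if_neg (Nat.not_even_iff_odd.mpr ho)]
      rw [this]
      exact le_add_of_nonneg_right dist_nonneg
end

section
/- Let (x_n) be a well-defined solution (all terms nonzero, all denominators below nonzero) of x_{n+1} = (a·x_n·x_{n-1} + b·x_{n-1} + c)/(x_n·x_{n-1}). Then for all n ≥ 0, x_{2n+1} = (c·J_{2n+1} + (J_{2n+3} - a·J_{2n+2})·x_{-1} + J_{2n+2}·x_{-1}·x_0) / (c·J_{2n} + (J_{2n+2} - a·J_{2n+1})·x_{-1} + J_{2n+1}·x_{-1}·x_0) and x_{2n+2} = (c·J_{2n+2} + (J_{2n+4} - a·J_{2n+3})·x_{-1} + J_{2n+3}·x_0·x_{-1}) / (c·J_{2n+1} + (J_{2n+3} - a·J_{2n+2})·x_{-1} + J_{2n+2}·x_0·x_{-1}). -/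
def Dfun (a c : ℝ) (J x : ℕ → ℝ) (n : ℕ) : ℝ :=
  c * J n + (J (n + 2) - a * J (n + 1)) * x 0 + J (n + 1) * x 0 * x 1

theorem stmt12 (a b c : ℝ) (hc : c ≠ 0)
    (J : ℕ → ℝ) (hJ0 : J 0 = 0) (hJ1 : J 1 = 1) (hJ2 : J 2 = a)
    (hJrec : ∀ n, J (n + 3) = a * J (n + 2) + b * J (n + 1) + c * J n)
    (x : ℕ → ℝ) (hx : ∀ n, x n ≠ 0)
    (hxrec : ∀ n, x (n + 2) = (a * x (n + 1) * x n + b * x n + c) / (x (n + 1) * x n))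
    (hden : ∀ n, c * J n + (J (n + 2) - a * J (n + 1)) * x 0
      + J (n + 1) * x 0 * x 1 ≠ 0) :
    ∀ n : ℕ,
      x (2 * n + 2) =
        (c * J (2 * n + 1) + (J (2 * n + 3) - a * J (2 * n + 2)) * x 0
          + J (2 * n + 2) * x 0 * x 1) /
        (c * J (2 * n) + (J (2 * n + 2) - a * J (2 * n + 1)) * x 0
          + J (2 * n + 1) * x 0 * x 1) ∧
      x (2 * n + 3) =
        (c * J (2 * n + 2) + (J (2 * n + 4) - a * J (2 * n + 3)) * x 0
          + J (2 * n + 3) * x 1 * x 0) /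
        (c * J (2 * n + 1) + (J (2 * n + 3) - a * J (2 * n + 2)) * x 0
          + J (2 * n + 2) * x 1 * x 0) := by
  have hDne : ∀ n, Dfun a c J x n ≠ 0 := hden
  have hDrec : ∀ n, Dfun a c J x (n + 3) =
      a * Dfun a c J x (n + 2) + b * Dfun a c J x (n + 1) + c * Dfun a c J x n := by
    intro n
    have h5 : J (n + 5) = a * J (n + 4) + b * J (n + 3) + c * J (n + 2) := hJrec (n + 2)
    have h4 : J (n + 4) = a * J (n + 3) + b * J (n + 2) + c * J (n + 1) := hJrec (n + 1)
    have h3 : J (n + 3) = a * J (n + 2) + b * J (n + 1) + c * J n := hJrec n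
    show c * J (n + 3) + (J (n + 5) - a * J (n + 4)) * x 0 + J (n + 4) * x 0 * x 1 =
      a * (c * J (n + 2) + (J (n + 4) - a * J (n + 3)) * x 0 + J (n + 3) * x 0 * x 1)
      + b * (c * J (n + 1) + (J (n + 3) - a * J (n + 2)) * x 0 + J (n + 2) * x 0 * x 1)
      + c * (c * J n + (J (n + 2) - a * J (n + 1)) * x 0 + J (n + 1) * x 0 * x 1)
    rw [h5, h4, h3]; ring
  have hJ3 : J 3 = a * a + b := by
    have := hJrec 0; rw [hJ0, hJ1, hJ2] at this; linarith
  have hJ4 : J 4 = a * (a * a + b) + b * a + c := by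
    have := hJrec 1; rw [hJ1, hJ2, hJ3] at this; linarith
  have hD0 : Dfun a c J x 0 = x 0 * x 1 := by
    show c * J 0 + (J 2 - a * J 1) * x 0 + J 1 * x 0 * x 1 = _
    rw [hJ0, hJ1, hJ2]; ring
  have hD1 : Dfun a c J x 1 = c + b * x 0 + a * (x 0 * x 1) := by
    show c * J 1 + (J 3 - a * J 2) * x 0 + J 2 * x 0 * x 1 = _
    rw [hJ1, hJ2, hJ3]; ring
  have hD2 : Dfun a c J x 2 = c * a + (a * b + c) * x 0 + (a * a + b) * (x 0 * x 1) := by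
    show c * J 2 + (J 4 - a * J 3) * x 0 + J 3 * x 0 * x 1 = _
    rw [hJ2, hJ3, hJ4]; ring
  have hx2 : x 2 = Dfun a c J x 1 / Dfun a c J x 0 := by
    have h := hxrec 0
    rw [hD0, hD1, h]; ring_nf
  have hx3 : x 3 = Dfun a c J x 2 / Dfun a c J x 1 := by
    have h := hxrec 1
    have hd1 : Dfun a c J x 1 ≠ 0 := hDne 1
    rw [hD1] at hd1
    rw [h, hx2, hD0, hD1, hD2]
    field_simp [hx 0, hx 1]
    ring
  have step : ∀ m, x (m + 2) = Dfun a c J x (m + 1) / Dfun a c J x m →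
      x (m + 3) = Dfun a c J x (m + 2) / Dfun a c J x (m + 1) →
      x (m + 4) = Dfun a c J x (m + 3) / Dfun a c J x (m + 2) := by
    intro m h1 h2
    have hr : x (m + 4) = (a * x (m + 3) * x (m + 2) + b * x (m + 2) + c)
        / (x (m + 3) * x (m + 2)) := hxrec (m + 2)
    rw [hr, h1, h2, hDrec m]
    have d0 := hDne m; have d1 := hDne (m + 1); have d2 := hDne (m + 2)
    field_simp
  have key : ∀ n, x (n + 2) = Dfun a c J x (n + 1) / Dfun a c J x n ∧
      x (n + 3) = Dfun a c J x (n + 2) / Dfun a c J x (n + 1) := by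
    intro n
    induction n with
    | zero => exact ⟨hx2, hx3⟩
    | succ m ih => exact ⟨ih.2, step m ih.1 ih.2⟩
  intro n
  refine ⟨(key (2 * n)).1, ?_⟩
  have h := (key (2 * n)).2
  have eN : Dfun a c J x (2 * n + 2) = c * J (2 * n + 2)
      + (J (2 * n + 4) - a * J (2 * n + 3)) * x 0 + J (2 * n + 3) * x 1 * x 0 := by
    show c * J (2 * n + 2) + (J (2 * n + 4) - a * J (2 * n + 3)) * x 0
      + J (2 * n + 3) * x 0 * x 1 = _
    ring
  have eD : Dfun a c J x (2 * n + 1) = c * J (2 * n + 1)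
      + (J (2 * n + 3) - a * J (2 * n + 2)) * x 0 + J (2 * n + 2) * x 1 * x 0 := by
    show c * J (2 * n + 1) + (J (2 * n + 3) - a * J (2 * n + 2)) * x 0
      + J (2 * n + 2) * x 0 * x 1 = _
    ring
  rw [h, eN, eD]
end

section
/- Let (x_n) be a solution of x_{n+1} = (x_n·x_{n-1} + x_{n-1} + 1)/(x_n·x_{n-1}) with positive initial values x_{-1}, x_0 > 0. Then x_n → α as n → ∞, where α is the real root of λ³ - λ² - λ - 1 = 0. -/
/-!
The limit `α` is the positive fixed point of `F(a, b) = 1 + 1/b + 1/(a b)`, which is the right-hand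
side of the recurrence. After a few steps every term lies in `[13/9, 3)`: terms are `> 1`, hence
`< 3`, hence `≥ 1 + 1/3 + 1/9`. On `[13/9, ∞)²`, and since `α > 9/5`, the identity
`F(a, b) - α = (α - b)(1/(bα) + 1/(abα)) + (α - a)/(aα²)` shows that `F` contracts the distance to
`α` by the factor `7/8` in the max-norm, so `|x n - α|` decays geometrically.
-/

open Filter Topology

lemma tendsto_zero_of_le_mul_max {u : ℕ → ℝ} {q : ℝ} (hu : ∀ n, 0 ≤ u n) (hq : q < 1)
    (h : ∀ n, u (n + 2) ≤ q * max (u n) (u (n + 1))) : Tendsto u atTop (𝓝 0) := by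
  set r := max q 0
  set M := max (u 0) (u 1)
  have hr0 : 0 ≤ r := le_max_right _ _
  have hr1 : r ≤ 1 := max_le hq.le zero_le_one
  have hM : 0 ≤ M := (hu 0).trans (le_max_left _ _)
  have hbound : ∀ n, u n ≤ M * r ^ (n / 2) := by
    intro n
    induction n using Nat.twoStepInduction with
    | zero => simp [M]
    | one => simp [M]
    | more n ih₀ ih₁ =>
      have hpow : r ^ ((n + 1) / 2) ≤ r ^ (n / 2) := pow_le_pow_of_le_one hr0 hr1 (by omega)
      have hmax : 0 ≤ max (u n) (u (n + 1)) := (hu n).trans (le_max_left _ _)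
      calc u (n + 2) ≤ r * max (u n) (u (n + 1)) :=
            (h n).trans (mul_le_mul_of_nonneg_right (le_max_left _ _) hmax)
        _ ≤ r * (M * r ^ (n / 2)) := by
            gcongr
            exact max_le ih₀ (ih₁.trans (mul_le_mul_of_nonneg_left hpow hM))
        _ = M * r ^ ((n + 2) / 2) := by rw [Nat.add_div_right n two_pos]; ring
  have hgeom : Tendsto (fun n => M * r ^ (n / 2)) atTop (𝓝 0) := by
    simpa using ((tendsto_pow_atTop_nhds_zero_of_lt_one hr0 (max_lt hq one_pos)).comp
      (Nat.tendsto_div_const_atTop two_ne_zero)).const_mul M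
  exact squeeze_zero hu hbound hgeom

noncomputable def recStep (a b : ℝ) : ℝ := (b * a + a + 1) / (b * a)

lemma recStep_eq {a b : ℝ} (ha : a ≠ 0) (hb : b ≠ 0) : recStep a b = 1 + 1 / b + 1 / (b * a) := by
  unfold recStep
  field_simp

lemma recStep_pos {a b : ℝ} (ha : 0 < a) (hb : 0 < b) : 0 < recStep a b := by
  unfold recStep
  positivity

lemma one_lt_recStep {a b : ℝ} (ha : 0 < a) (hb : 0 < b) : 1 < recStep a b := by
  rw [recStep_eq ha.ne' hb.ne']
  have : 0 < 1 / b + 1 / (b * a) := by positivity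
  linarith

lemma recStep_lt_three {a b : ℝ} (ha : 1 < a) (hb : 1 < b) : recStep a b < 3 := by
  rw [recStep_eq (by positivity) (by positivity)]
  have h₁ : 1 / b < 1 := (div_lt_one (by positivity)).2 hb
  have h₂ : 1 / (b * a) < 1 := (div_lt_one (by positivity)).2 (one_lt_mul hb.le ha)
  linarith

lemma le_recStep_of_lt_three {a b : ℝ} (ha : 0 < a) (hb : 0 < b) (ha3 : a < 3) (hb3 : b < 3) :
    13 / 9 ≤ recStep a b := by
  rw [recStep_eq ha.ne' hb.ne']
  have h₁ : 1 / 3 ≤ 1 / b := one_div_le_one_div_of_le hb hb3.le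
  have h₂ : 1 / 9 ≤ 1 / (b * a) := by
    rw [show (9 : ℝ) = 3 * 3 by norm_num]
    exact one_div_le_one_div_of_le (by positivity) (by nlinarith)
  linarith

lemma nine_div_five_lt_of_cubic {α : ℝ} (hα : α ^ 3 - α ^ 2 - α - 1 = 0) : 9 / 5 < α := by
  nlinarith [sq_nonneg (α + 2 / 5), sq_nonneg α]

lemma recStep_sub_eq {α a b : ℝ} (hα : α ^ 3 - α ^ 2 - α - 1 = 0) (hα0 : α ≠ 0) (ha : a ≠ 0)
    (hb : b ≠ 0) :
    recStep a b - α = (α - b) * (1 / (b * α) + 1 / (b * a * α)) + (α - a) * (1 / (a * α ^ 2)) := by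
  unfold recStep
  field_simp
  linear_combination (-(a * b)) * hα

lemma abs_recStep_sub_le {α a b : ℝ} (hα : α ^ 3 - α ^ 2 - α - 1 = 0) (ha : 13 / 9 ≤ a)
    (hb : 13 / 9 ≤ b) : |recStep a b - α| ≤ 7 / 8 * max |a - α| |b - α| := by
  have hα9 := nine_div_five_lt_of_cubic hα
  have ha0 : 0 < a := by linarith
  have hb0 : 0 < b := by linarith
  have hα0 : 0 < α := by linarith
  have hc₁ : 1 / (b * α) + 1 / (b * a * α) ≤ 110 / 169 := by
    have h₁ : 1 / (b * α) ≤ 5 / 13 := by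
      rw [div_le_div_iff₀ (by positivity) (by norm_num)]
      nlinarith
    have h₂ : 1 / (b * a * α) ≤ 45 / 169 := by
      rw [div_le_div_iff₀ (by positivity) (by norm_num)]
      nlinarith [mul_le_mul hb ha (by norm_num) hb0.le]
    linarith
  have hc₂ : 1 / (a * α ^ 2) ≤ 25 / 117 := by
    rw [div_le_div_iff₀ (by positivity) (by norm_num)]
    nlinarith [sq_nonneg (α - 9 / 5)]
  set M := max |a - α| |b - α|
  have hA : |α - a| ≤ M := abs_sub_comm a α ▸ le_max_left _ _
  have hB : |α - b| ≤ M := abs_sub_comm b α ▸ le_max_right _ _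
  rw [recStep_sub_eq hα hα0.ne' ha0.ne' hb0.ne']
  calc _ ≤ |α - b| * (1 / (b * α) + 1 / (b * a * α)) + |α - a| * (1 / (a * α ^ 2)) := by
        refine (abs_add_le _ _).trans_eq ?_
        rw [abs_mul, abs_mul, abs_of_nonneg (a := 1 / (b * α) + _) (by positivity),
          abs_of_nonneg (a := 1 / (a * α ^ 2)) (by positivity)]
    _ ≤ M * (110 / 169) + M * (25 / 117) := by gcongr
    _ ≤ 7 / 8 * M := by linarith [(abs_nonneg _).trans hA]

section Sequence

variable {x : ℕ → ℝ}

lemma pos_of_recStep (hx0 : 0 < x 0) (hx1 : 0 < x 1)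
    (hrec : ∀ n, x (n + 2) = recStep (x n) (x (n + 1))) (n : ℕ) : 0 < x n := by
  induction n using Nat.twoStepInduction with
  | zero => exact hx0
  | one => exact hx1
  | more n ih₀ ih₁ => exact hrec n ▸ recStep_pos ih₀ ih₁

lemma thirteen_div_nine_le_of_recStep (hx0 : 0 < x 0) (hx1 : 0 < x 1)
    (hrec : ∀ n, x (n + 2) = recStep (x n) (x (n + 1))) (n : ℕ) : 13 / 9 ≤ x (n + 6) := by
  have hpos := pos_of_recStep hx0 hx1 hrec
  have hgt : ∀ n, 1 < x (n + 2) := fun n => hrec n ▸ one_lt_recStep (hpos n) (hpos (n + 1))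
  have hlt : ∀ n, x (n + 4) < 3 := fun n => hrec (n + 2) ▸ recStep_lt_three (hgt n) (hgt (n + 1))
  exact hrec (n + 4) ▸ le_recStep_of_lt_three (hpos _) (hpos _) (hlt n) (hlt (n + 1))

end Sequence

/- The sequence is shifted: `x 0` plays the role of `x₋₁`, `x 1` of `x₀`. -/
theorem stmt15 (α : ℝ) (hα : α ^ 3 - α ^ 2 - α - 1 = 0)
    (x : ℕ → ℝ) (hx0 : 0 < x 0) (hx1 : 0 < x 1)
    (hxrec : ∀ n, x (n + 2) = (x (n + 1) * x n + x n + 1) / (x (n + 1) * x n)) :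
    Filter.Tendsto x Filter.atTop (nhds α) := by
  have hrec : ∀ n, x (n + 2) = recStep (x n) (x (n + 1)) := hxrec
  have hlow := thirteen_div_nine_le_of_recStep hx0 hx1 hrec
  have hdist : Tendsto (fun n => |x (n + 6) - α|) atTop (𝓝 0) :=
    tendsto_zero_of_le_mul_max (fun _ => abs_nonneg _) (by norm_num) fun n =>
      hrec (n + 6) ▸ abs_recStep_sub_le hα (hlow n) (hlow (n + 1))
  refine (tendsto_add_atTop_iff_nat 6).mp (tendsto_iff_dist_tendsto_zero.2 ?_)
  simpa only [Real.dist_eq] using hdist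
end

section
/- Let α be the real root of λ³ - λ² - λ - 1 = 0. The characteristic polynomial P(λ) = λ⁴ + ((2α³ - α² - 2α - 1)/α⁶)·λ² + 1/α⁶ of the linearization of the system x_{n+1} = (y_n·x_{n-1} + x_{n-1} + 1)/(y_n·x_{n-1}), y_{n+1} = (x_n·y_{n-1} + y_{n-1} + 1)/(x_n·y_{n-1}) at the equilibrium (α, α) has all its (complex) roots of modulus strictly less than 1. -/
/-!
With `w = z²` the quartic becomes the real quadratic `w² + b w + c` with
`b = (α² + 1) / α⁶` (using `α³ = α² + α + 1`) and `c = 1 / α⁶`. Since `α > 1`, its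
discriminant `b² - 4c` is negative, so its roots are complex conjugates of modulus `√c`.
Hence `‖z‖⁴ = c < 1`.
-/

theorem one_lt_of_pow_three_sub_pow_two_sub_sub_one_eq_zero {α : ℝ}
    (hα : α ^ 3 - α ^ 2 - α - 1 = 0) : 1 < α := by
  nlinarith [sq_nonneg (α - 1), sq_nonneg (α + 1), sq_nonneg (α ^ 2 - 1)]

/-- Writing `w = x + i y`, the imaginary part forces `x = -b/2` (a real root would
contradict the discriminant), and then the real part gives `x² + y² = c`. -/
theorem Complex.normSq_eq_of_quadratic_eq_zero {b c : ℝ} (hdisc : b ^ 2 < 4 * c) {w : ℂ}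
    (hw : w ^ 2 + b * w + c = 0) : Complex.normSq w = c := by
  have hre : w.re ^ 2 - w.im ^ 2 + b * w.re + c = 0 := by
    simpa [sq] using congrArg Complex.re hw
  have him : w.im * (2 * w.re + b) = 0 := by
    have := congrArg Complex.im hw
    simp only [sq, Complex.add_im, Complex.mul_im, Complex.ofReal_re, Complex.ofReal_im,
      Complex.zero_im] at this
    linear_combination this
  rcases mul_eq_zero.mp him with h | h
  · nlinarith [sq_nonneg (2 * w.re + b)]
  · rw [Complex.normSq_apply]
    linear_combination -hre + w.re * h

theorem Complex.norm_lt_one_of_biquadratic_eq_zero {b c : ℝ} (hdisc : b ^ 2 < 4 * c)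
    (hc : c < 1) {z : ℂ} (hz : z ^ 4 + b * z ^ 2 + c = 0) : ‖z‖ < 1 := by
  have hnormSq : Complex.normSq (z ^ 2) = c :=
    Complex.normSq_eq_of_quadratic_eq_zero hdisc (by linear_combination hz)
  have hpow : ‖z‖ ^ 4 < 1 := by
    rw [← hnormSq, Complex.normSq_eq_norm_sq, norm_pow] at hc
    linear_combination hc
  exact (pow_lt_one_iff_of_nonneg (norm_nonneg z) (by norm_num)).mp hpow

theorem stmt16 (α : ℝ) (hα : α ^ 3 - α ^ 2 - α - 1 = 0) :
    ∀ z : ℂ, z ^ 4 + (((2 * α ^ 3 - α ^ 2 - 2 * α - 1 : ℝ) : ℂ) / (α : ℂ) ^ 6) * z ^ 2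
      + 1 / (α : ℂ) ^ 6 = 0 → ‖z‖ < 1 := by
  intro z hz
  have hα1 : 1 < α := one_lt_of_pow_three_sub_pow_two_sub_sub_one_eq_zero hα
  have hb : 2 * α ^ 3 - α ^ 2 - 2 * α - 1 = α ^ 2 + 1 := by linear_combination 2 * hα
  have hdisc : ((α ^ 2 + 1) / α ^ 6) ^ 2 < 4 * (1 / α ^ 6) := by
    rw [div_pow, div_lt_iff₀ (by positivity)]
    field_simp
    nlinarith [mul_pos (by linarith : (0 : ℝ) < α - 1) (by positivity : (0 : ℝ) < α ^ 2 + α + 1)]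
  have hc : 1 / α ^ 6 < 1 := (div_lt_one (by positivity)).mpr (one_lt_pow₀ hα1 (by norm_num))
  have hz' : z ^ 4 + (((α ^ 2 + 1) / α ^ 6 : ℝ) : ℂ) * z ^ 2 + ((1 / α ^ 6 : ℝ) : ℂ) = 0 := by
    rw [hb] at hz
    push_cast at hz ⊢
    exact hz
  exact Complex.norm_lt_one_of_biquadratic_eq_zero hdisc hc hz'
end

section
/- Let P be the generalized Padovan sequence P(n+3) = b·P(n+1) + c·P(n) with P(0)=0, P(1)=1, P(2)=0, and let (x_n) be a well-defined solution of x_{n+1} = (b·x_{n-1} + c)/(x_n·x_{n-1}). Then for all n ≥ 0, x_{2n+1} = (c·P_{2n+1} + P_{2n+3}·x_{-1} + P_{2n+2}·x_{-1}·x_0)/(c·P_{2n} + P_{2n+2}·x_{-1} + P_{2n+1}·x_{-1}·x_0) and x_{2n+2} = (c·P_{2n+2} + P_{2n+4}·x_{-1} + P_{2n+3}·x_0·x_{-1})/(c·P_{2n+1} + P_{2n+3}·x_{-1} + P_{2n+2}·x_0·x_{-1}). -/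
/- The sequence is shifted: `x 0` plays the role of `x₋₁`, `x 1` of `x₀`, etc. -/
theorem stmt19 (b c : ℝ) (hc : c ≠ 0)
    (P : ℕ → ℝ) (hP0 : P 0 = 0) (hP1 : P 1 = 1) (hP2 : P 2 = 0)
    (hPrec : ∀ n, P (n + 3) = b * P (n + 1) + c * P n)
    (x : ℕ → ℝ) (hx : ∀ n, x n ≠ 0)
    (hxrec : ∀ n, x (n + 2) = (b * x n + c) / (x (n + 1) * x n))
    (hden : ∀ n, c * P n + P (n + 2) * x 0 + P (n + 1) * x 0 * x 1 ≠ 0) :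
    ∀ n : ℕ,
      x (2 * n + 2) =
        (c * P (2 * n + 1) + P (2 * n + 3) * x 0 + P (2 * n + 2) * x 0 * x 1) /
        (c * P (2 * n) + P (2 * n + 2) * x 0 + P (2 * n + 1) * x 0 * x 1) ∧
      x (2 * n + 3) =
        (c * P (2 * n + 2) + P (2 * n + 4) * x 0 + P (2 * n + 3) * x 1 * x 0) /
        (c * P (2 * n + 1) + P (2 * n + 3) * x 0 + P (2 * n + 2) * x 1 * x 0) := by
  set D : ℕ → ℝ := fun n => c * P n + P (n + 2) * x 0 + P (n + 1) * x 0 * x 1 with hD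
  have hDne : ∀ n, D n ≠ 0 := hden
  have hx0 := hx 0
  have hx1 := hx 1
  have p3 : P 3 = b := by have := hPrec 0; rw [hP1, hP0] at this; linarith
  have p4 : P 4 = c := by have := hPrec 1; rw [hP2, hP1] at this; linarith
  have d0 : D 0 = x 0 * x 1 := by simp only [hD]; rw [hP0, hP1, hP2]; ring
  have d1 : D 1 = c + b * x 0 := by
    show c * P 1 + P 3 * x 0 + P 2 * x 0 * x 1 = _
    rw [hP1, hP2, p3]; ring
  have d2 : D 2 = c * x 0 + b * x 0 * x 1 := by
    show c * P 2 + P 4 * x 0 + P 3 * x 0 * x 1 = _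
    rw [hP2, p3, p4]; ring
  have hd1ne : (c + b * x 0) ≠ 0 := d1 ▸ hDne 1
  have b0 : x 2 = D 1 / D 0 := by
    rw [hxrec 0, d0, d1]; rw [mul_comm (x 1) (x 0)]; ring_nf
  have b1 : x 3 = D 2 / D 1 := by
    rw [hxrec 1, b0, d0, d1, d2]
    field_simp
    ring
  have calc_lem : ∀ d0 d1 d2 : ℝ, d0 ≠ 0 → d1 ≠ 0 → d2 ≠ 0 →
      (b * (d1 / d0) + c) / ((d2 / d1) * (d1 / d0)) = (b * d1 + c * d0) / d2 := by
    intro e0 e1 e2 h0 h1 h2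
    field_simp
  have key : ∀ n, x (n + 2) = D (n + 1) / D n ∧ x (n + 3) = D (n + 2) / D (n + 1) := by
    intro n
    induction n with
    | zero => exact ⟨b0, b1⟩
    | succ m ih =>
      refine ⟨ih.2, ?_⟩
      have h1 := ih.1
      have h2 := ih.2
      have hr : x (m + 4) = (b * x (m + 2) + c) / (x (m + 3) * x (m + 2)) := hxrec (m + 2)
      have hDrec : D (m + 3) = b * D (m + 1) + c * D m := by
        show c * P (m + 3) + P (m + 2 + 3) * x 0 + P (m + 1 + 3) * x 0 * x 1 =
          b * (c * P (m + 1) + P (m + 3) * x 0 + P (m + 2) * x 0 * x 1) +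
          c * (c * P m + P (m + 2) * x 0 + P (m + 1) * x 0 * x 1)
        rw [hPrec (m + 2), hPrec (m + 1), hPrec m]
        ring
      show x (m + 4) = D (m + 3) / D (m + 2)
      rw [hr, h1, h2, hDrec]
      exact calc_lem (D m) (D (m + 1)) (D (m + 2)) (hDne m) (hDne (m + 1)) (hDne (m + 2))
  intro n
  constructor
  · have h := (key (2 * n)).1
    simp only [hD] at h
    exact h
  · have h : x (2 * n + 3) =
        (c * P (2 * n + 2) + P (2 * n + 4) * x 0 + P (2 * n + 3) * x 0 * x 1) /
        (c * P (2 * n + 1) + P (2 * n + 3) * x 0 + P (2 * n + 2) * x 0 * x 1) := by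
      have h := (key (2 * n + 1)).1
      simp only [hD] at h
      exact h
    rw [h]; ring_nf
end
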